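/- arXiv:1909.01334 — 5 statements merged into one kernel-verified Lean document; each statement's English description precedes it below -/
import Mathlib

section
/- Let p be a prime and K a finite Galois extension of ℚ_p, equipped with the unique absolute value ‖·‖ extending the p-adic absolute value of ℚ_p. Let α, β ∈ K satisfy ‖α − 1‖ < 1 and ‖β − 1‖ < 1, suppose α is not a root of unity, and suppose α and β are conjugate over ℚ_p, i.e., σ(α) = β for some σ ∈ Gal(K/ℚ_p). Let w ∈ ℤ_p^× be such that for every sequence (a_j) of natural numbers converging to w in ℤ_p, the sequence α^{a_j} converges to β in K (so that β = α^w). Then w is a root of unity in ℤ_p: w^m = 1 for some integer m ≥ 1 (indeed m = [K : ℚ_p] works). -/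
/-!
If `‖x - 1‖ < 1` in an ultrametric field with `‖p‖ < 1`, then `x ^ p ^ N → 1`, so `n ↦ x ^ n` is
uniformly continuous for the `p`-adic topology on `ℕ` and `p`-adic powers obey the usual rules:
`x ^ (z * z') = (x ^ z) ^ z'` and `σ (x ^ z) = (σ x) ^ z` for continuous automorphisms `σ`.
Hence `σ ^ k` sends `α` to `α ^ w ^ k`, and `σ ^ [K : ℚ_p] = 1` gives `α ^ (w ^ [K : ℚ_p] - 1) = 1`.
If `w ^ [K : ℚ_p] - 1 = p ^ v * u ≠ 0` with `u` a unit, raising to the power `u⁻¹` gives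
`α ^ p ^ v = 1`, contradicting that `α` is not a root of unity.
-/

open Filter Topology

theorem norm_pow_le_one_of_norm_le_one {K : Type*} [NormedField K] {x : K} (hx : ‖x‖ ≤ 1)
    (n : ℕ) : ‖x ^ n‖ ≤ 1 :=
  norm_pow x n ▸ pow_le_one₀ (norm_nonneg x) hx

namespace IsUltrametricDist

variable {K : Type*} [NormedField K] [IsUltrametricDist K] {x : K}

theorem norm_le_one_of_norm_sub_one_lt_one (hx : ‖x - 1‖ < 1) : ‖x‖ ≤ 1 := by
  simpa using (norm_add_one_le_max_norm_one (x - 1)).trans (max_le hx.le le_rfl)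

theorem norm_pow_sub_pow_le {y : K} (hx : ‖x‖ ≤ 1) (hy : ‖y‖ ≤ 1) (n : ℕ) :
    ‖x ^ n - y ^ n‖ ≤ ‖x - y‖ := by
  induction n with
  | zero => simp
  | succ n ih =>
    rw [show x ^ (n + 1) - y ^ (n + 1) = x ^ n * (x - y) + (x ^ n - y ^ n) * y by ring]
    refine (norm_add_le_max _ _).trans (max_le ?_ ?_) <;> rw [norm_mul]
    · exact mul_le_of_le_one_left (norm_nonneg _) (norm_pow_le_one_of_norm_le_one hx n)
    · exact (mul_le_mul ih hy (norm_nonneg _) (norm_nonneg _)).trans_eq (mul_one _)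

theorem norm_pow_sub_one_le (hx : ‖x‖ ≤ 1) (n : ℕ) : ‖x ^ n - 1‖ ≤ ‖x - 1‖ := by
  simpa using norm_pow_sub_pow_le hx norm_one.le n

theorem norm_pow_sub_pow_le_of_dvd (hx : ‖x‖ ≤ 1) {d n m : ℕ} (h : (d : ℤ) ∣ n - m) :
    ‖x ^ n - x ^ m‖ ≤ ‖x ^ d - 1‖ := by
  wlog hmn : m ≤ n generalizing n m
  · rw [norm_sub_rev]
    exact this (dvd_sub_comm.mp h) (le_of_not_ge hmn)
  rw [← Nat.cast_sub hmn] at h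
  obtain ⟨k, hk⟩ := Int.natCast_dvd_natCast.mp h
  have hsplit : x ^ n - x ^ m = x ^ m * ((x ^ d) ^ k - 1) := by
    rw [mul_sub, mul_one, ← pow_mul, ← pow_add, ← hk, Nat.add_sub_cancel' hmn]
  rw [hsplit, norm_mul]
  exact (mul_le_mul (norm_pow_le_one_of_norm_le_one hx m)
    (norm_pow_sub_one_le (norm_pow_le_one_of_norm_le_one hx d) k) (norm_nonneg _)
    zero_le_one).trans_eq (one_mul _)

theorem norm_pow_sub_one_le_max_mul (hx : ‖x‖ ≤ 1) (q : ℕ) :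
    ‖x ^ q - 1‖ ≤ max ‖(q : K)‖ ‖x - 1‖ * ‖x - 1‖ := by
  have hsplit : x ^ q - 1 = ((∑ i ∈ Finset.range q, (x ^ i - 1)) + (q : K)) * (x - 1) := by
    rw [Finset.sum_sub_distrib, ← geom_sum_mul]
    simp
  rw [hsplit, norm_mul]
  refine mul_le_mul_of_nonneg_right ((norm_add_le_max _ _).trans (max_le ?_ (le_max_left _ _)))
    (norm_nonneg _)
  exact (norm_sum_le_of_forall_le_of_nonneg (norm_nonneg _) fun i _ =>
    norm_pow_sub_one_le hx i).trans (le_max_right _ _)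

theorem tendsto_pow_pow_nhds_one {q : ℕ} (hq : ‖(q : K)‖ < 1) (hx : ‖x - 1‖ < 1) :
    Tendsto (fun n => x ^ q ^ n) atTop (𝓝 1) := by
  set s := max ‖(q : K)‖ ‖x - 1‖
  have hx1 := norm_le_one_of_norm_sub_one_lt_one hx
  have hbound : ∀ n, ‖x ^ q ^ n - 1‖ ≤ s ^ n * ‖x - 1‖ := by
    intro n
    induction n with
    | zero => simp
    | succ n ih =>
      have hxn : ‖x ^ q ^ n‖ ≤ 1 := norm_pow_le_one_of_norm_le_one hx1 _
      rw [pow_succ, pow_mul]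
      calc ‖(x ^ q ^ n) ^ q - 1‖ ≤ max ‖(q : K)‖ ‖x ^ q ^ n - 1‖ * ‖x ^ q ^ n - 1‖ :=
            norm_pow_sub_one_le_max_mul hxn q
        _ ≤ s * (s ^ n * ‖x - 1‖) := by
            gcongr
            exact max_le_max le_rfl (norm_pow_sub_one_le hx1 _)
        _ = s ^ (n + 1) * ‖x - 1‖ := by ring
  rw [tendsto_iff_norm_sub_tendsto_zero]
  refine squeeze_zero (fun n => norm_nonneg _) hbound ?_
  simpa using (tendsto_pow_atTop_nhds_zero_of_lt_one (le_max_of_le_left (norm_nonneg _))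
    (max_lt hq hx)).mul_const ‖x - 1‖

end IsUltrametricDist

namespace PadicInt

variable {p : ℕ} [Fact p.Prime]

theorem exists_tendsto_natCast (z : ℤ_[p]) :
    ∃ a : ℕ → ℕ, Tendsto (fun j => (a j : ℤ_[p])) atTop (𝓝 z) := by
  obtain ⟨u, hu, hlim⟩ := mem_closure_iff_seq_limit.mp
    ((denseRange_natCast (p := p)).closure_range.symm ▸ Set.mem_univ z)
  choose a ha using hu
  exact ⟨a, by simpa only [ha] using hlim⟩

theorem eventually_pow_dvd_of_tendsto_zero {ι : Type*} {l : Filter ι} {f : ι → ℤ}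
    (hf : Tendsto (fun i => (f i : ℤ_[p])) l (𝓝 0)) (N : ℕ) :
    ∀ᶠ i in l, (p : ℤ) ^ N ∣ f i := by
  filter_upwards [(Metric.tendsto_nhds.mp hf) _ 
    (zpow_pos (Nat.cast_pos.mpr (Fact.out : p.Prime).pos) (-(N : ℤ)))]
    with i hi
  rw [← norm_int_le_pow_iff_dvd]
  exact (dist_zero_right (f i : ℤ_[p]) ▸ hi).le

end PadicInt

section PadicPow

variable {p : ℕ} [Fact p.Prime] {K : Type*} [NormedField K]

/-- `y = x ^ z` for the `p`-adic exponent `z`. -/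
def HasPadicPow (x : K) (z : ℤ_[p]) (y : K) : Prop :=
  ∀ a : ℕ → ℕ, Tendsto (fun j => (a j : ℤ_[p])) atTop (𝓝 z) →
    Tendsto (fun j => x ^ a j) atTop (𝓝 y)

theorem HasPadicPow.unique {x y y' : K} {z : ℤ_[p]} (h : HasPadicPow x z y)
    (h' : HasPadicPow x z y') : y = y' := by
  obtain ⟨a, ha⟩ := PadicInt.exists_tendsto_natCast z
  exact tendsto_nhds_unique (h a ha) (h' a ha)

theorem HasPadicPow.map {F : Type*} [FunLike F K K] [MonoidHomClass F K K] (f : F)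
    (hf : Continuous f) {x y : K} {z : ℤ_[p]} (h : HasPadicPow x z y) :
    HasPadicPow (f x) z (f y) := fun a ha => by
  simpa only [Function.comp_def, map_pow] using (hf.tendsto y).comp (h a ha)

variable [IsUltrametricDist K] (hp : ‖(p : K)‖ < 1) {x : K} (hx : ‖x - 1‖ < 1)
include hp hx

theorem tendsto_pow_sub_pow_of_tendsto_natCast_sub {ι : Type*} {l : Filter ι} {n m : ι → ℕ}
    (h : Tendsto (fun i => (n i : ℤ_[p]) - m i) l (𝓝 0)) :
    Tendsto (fun i => x ^ n i - x ^ m i) l (𝓝 0) := by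
  rw [NormedAddGroup.tendsto_nhds_zero]
  intro ε hε
  obtain ⟨N, hN⟩ := ((IsUltrametricDist.tendsto_pow_pow_nhds_one hp hx).eventually
    (Metric.ball_mem_nhds 1 hε)).exists
  filter_upwards [PadicInt.eventually_pow_dvd_of_tendsto_zero
    (f := fun i => (n i : ℤ) - m i) (by simpa using h) N] with i hi
  exact (IsUltrametricDist.norm_pow_sub_pow_le_of_dvd
    (IsUltrametricDist.norm_le_one_of_norm_sub_one_lt_one hx) (by exact_mod_cast hi)).trans_lt
    (dist_eq_norm (x ^ p ^ N) 1 ▸ hN)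

theorem hasPadicPow_of_tendsto {z : ℤ_[p]} {y : K} {a : ℕ → ℕ}
    (ha : Tendsto (fun j => (a j : ℤ_[p])) atTop (𝓝 z))
    (hy : Tendsto (fun j => x ^ a j) atTop (𝓝 y)) : HasPadicPow x z y := fun b hb => by
  have hdiff := tendsto_pow_sub_pow_of_tendsto_natCast_sub hp hx (by simpa using hb.sub ha)
  simpa using hdiff.add hy

theorem hasPadicPow_natCast (n : ℕ) : HasPadicPow x (n : ℤ_[p]) (x ^ n) :=
  hasPadicPow_of_tendsto hp hx tendsto_const_nhds tendsto_const_nhds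

theorem HasPadicPow.of_add {z z' : ℤ_[p]} {y y' : K} (h : HasPadicPow x (z + z') y)
    (h' : HasPadicPow x z' y') (hy' : y' ≠ 0) : HasPadicPow x z (y / y') := by
  obtain ⟨a, ha⟩ := PadicInt.exists_tendsto_natCast z
  obtain ⟨b, hb⟩ := PadicInt.exists_tendsto_natCast z'
  have hx0 : x ≠ 0 := by
    rintro rfl
    norm_num at hx
  refine hasPadicPow_of_tendsto hp hx ha ?_
  have hab := (h (fun j => a j + b j) (by simpa using ha.add hb)).div (h' b hb) hy'
  refine hab.congr fun j => ?_
  simp only [Pi.div_apply, pow_add, mul_div_cancel_right₀ _ (pow_ne_zero _ hx0)]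

theorem HasPadicPow.pow_mul {z z' : ℤ_[p]} {y y' : K} (h : HasPadicPow x z y)
    (h' : HasPadicPow y z' y') : HasPadicPow x (z * z') y' := by
  obtain ⟨a, ha⟩ := PadicInt.exists_tendsto_natCast z
  obtain ⟨b, hb⟩ := PadicInt.exists_tendsto_natCast z'
  have hx1 := IsUltrametricDist.norm_le_one_of_norm_sub_one_lt_one hx
  have hxa := h a ha
  have hy1 : ‖y‖ ≤ 1 :=
    le_of_tendsto' hxa.norm fun j => norm_pow_le_one_of_norm_le_one hx1 (a j)
  refine hasPadicPow_of_tendsto hp hx (a := fun j => a j * b j) (by simpa using ha.mul hb) ?_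
  -- `x ^ (a j * b j) = (x ^ a j) ^ b j` stays within `‖x ^ a j - y‖` of `y ^ b j → y'`
  have hclose : Tendsto (fun j => (x ^ a j) ^ b j - y ^ b j) atTop (𝓝 0) := by
    rw [tendsto_zero_iff_norm_tendsto_zero]
    refine squeeze_zero (fun j => norm_nonneg _) (fun j =>
      IsUltrametricDist.norm_pow_sub_pow_le (norm_pow_le_one_of_norm_le_one hx1 (a j)) hy1 (b j)) ?_
    simpa using (hxa.sub_const y).norm
  simpa only [_root_.pow_mul, sub_add_cancel, zero_add] using hclose.add (h' b hb)

theorem HasPadicPow.iterate {R : Type*} [CommSemiring R] [Algebra R K] {σ : K ≃ₐ[R] K}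
    (hσ : Continuous σ) {z : ℤ_[p]} (h : HasPadicPow x z (σ x)) (k : ℕ) :
    HasPadicPow x (z ^ k) ((σ ^ k) x) := by
  induction k with
  | zero => simpa using hasPadicPow_natCast hp hx 1
  | succ k ih =>
    have hσk : Continuous (σ ^ k) := by simpa using hσ.iterate k
    rw [pow_succ, pow_succ, AlgEquiv.mul_apply]
    exact ih.pow_mul hp hx (h.map (σ ^ k) hσk)

theorem HasPadicPow.pow_valuation_eq_one {z : ℤ_[p]} (h : HasPadicPow x z 1) (hz : z ≠ 0) :
    x ^ p ^ z.valuation = 1 := by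
  set u := PadicInt.unitCoeff hz
  have hpow : z * ((u⁻¹ : ℤ_[p]ˣ) : ℤ_[p]) = ((p ^ z.valuation : ℕ) : ℤ_[p]) := by
    conv_lhs => rw [PadicInt.unitCoeff_spec hz]
    rw [mul_right_comm, Units.mul_inv, one_mul, Nat.cast_pow]
  have h1 : HasPadicPow x (z * ((u⁻¹ : ℤ_[p]ˣ) : ℤ_[p])) 1 :=
    h.pow_mul hp hx fun a _ => by simp only [one_pow]; exact tendsto_const_nhds
  exact (hasPadicPow_natCast hp hx _).unique (hpow ▸ h1)

end PadicPow

theorem stmt_2_general (p : ℕ) [Fact p.Prime] (K : Type) [NormedField K]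
    [Algebra ℚ_[p] K] [FiniteDimensional ℚ_[p] K] [IsGalois ℚ_[p] K]
    (hext : ∀ x : ℚ_[p], ‖algebraMap ℚ_[p] K x‖ = ‖x‖)
    (α β : K) (hα : ‖α - 1‖ < 1)
    (hαru : ∀ m : ℕ, 1 ≤ m → α ^ m ≠ 1)
    (σ : K ≃ₐ[ℚ_[p]] K) (hσ : σ α = β)
    (w : ℤ_[p]ˣ)
    (hw : ∀ a : ℕ → ℕ,
      Tendsto (fun j => ((a j : ℤ_[p]))) atTop (𝓝 (w : ℤ_[p])) →
      Tendsto (fun j => α ^ (a j)) atTop (𝓝 β)) :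
    ∃ m : ℕ, 1 ≤ m ∧ (w : ℤ_[p]) ^ m = 1 ∧ m = Module.finrank ℚ_[p] K := by
  let : NormedAlgebra ℚ_[p] K := ⟨fun c x => by rw [Algebra.smul_def, norm_mul, hext]⟩
  have : IsUltrametricDist K := IsUltrametricDist.of_normedAlgebra ℚ_[p]
  have hp : ‖(p : K)‖ < 1 := by
    rw [← map_natCast (algebraMap ℚ_[p] K), hext]
    exact Padic.norm_p_lt_one
  have hα0 : α ≠ 0 := fun h => by norm_num [h] at hα
  refine ⟨_, Module.finrank_pos, ?_, rfl⟩
  have hσm : σ ^ Module.finrank ℚ_[p] K = 1 :=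
    IsGalois.card_aut_eq_finrank ℚ_[p] K ▸ pow_card_eq_one'
  have hperiod : HasPadicPow α ((w : ℤ_[p]) ^ Module.finrank ℚ_[p] K - 1 + 1) α := by
    simpa [hσm] using (hσ ▸ hw : HasPadicPow α (w : ℤ_[p]) (σ α)).iterate hp hα
      σ.toLinearMap.continuous_of_finiteDimensional (Module.finrank ℚ_[p] K)
  have hone : HasPadicPow α ((w : ℤ_[p]) ^ Module.finrank ℚ_[p] K - 1) 1 := by
    simpa [div_self hα0] using
      hperiod.of_add hp hα (by simpa using hasPadicPow_natCast hp hα 1) hα0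
  by_contra hne
  exact hαru _ (Nat.one_le_pow _ _ (Fact.out : p.Prime).pos)
    (hone.pow_valuation_eq_one hp hα (sub_ne_zero.mpr hne))

/-- Proposition B: let `K/ℚ_p` be a finite Galois extension with (the unique) absolute
value extending the `p`-adic one.  If `α, β ∈ K` satisfy `‖α−1‖ < 1`, `‖β−1‖ < 1`, `α` is
not a root of unity, `β = σ(α)` for some `σ ∈ Gal(K/ℚ_p)`, and `β = α^w` for a unit
`w ∈ ℤ_p^×` (in the sense that `α^{a_j} → β` whenever `a_j → w`), then `w` is a root of
unity: `w^m = 1` for some `m ≥ 1`. -/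
theorem stmt_2 (p : ℕ) [Fact p.Prime] (K : Type) [NormedField K]
    [Algebra ℚ_[p] K] [FiniteDimensional ℚ_[p] K] [IsGalois ℚ_[p] K]
    (hext : ∀ x : ℚ_[p], ‖algebraMap ℚ_[p] K x‖ = ‖x‖)
    (α β : K) (hα : ‖α - 1‖ < 1) (hβ : ‖β - 1‖ < 1)
    (hαru : ∀ m : ℕ, 1 ≤ m → α ^ m ≠ 1)
    (σ : K ≃ₐ[ℚ_[p]] K) (hσ : σ α = β)
    (w : ℤ_[p]ˣ)
    (hw : ∀ a : ℕ → ℕ,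
      Tendsto (fun j => ((a j : ℤ_[p]))) atTop (𝓝 (w : ℤ_[p])) →
      Tendsto (fun j => α ^ (a j)) atTop (𝓝 β)) :
    ∃ m : ℕ, 1 ≤ m ∧ (w : ℤ_[p]) ^ m = 1 ∧ m = Module.finrank ℚ_[p] K :=
  stmt_2_general p K hext α β hα hαru σ hσ w hw
end

section
/- If nonzero real polynomials f and g belong to the same Hillar class, then their Mahler measures are equal: M(f) = M(g). -/
/-!
By Jensen's formula the root-product definition is Mathlib's `Polynomial.mahlerMeasure` of the
complexified polynomial. That measure is multiplicative, equals `‖a‖` on a constant `a` and `1`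
on `X`, so `M(f) = M(u) M(v)` and `M(g) = M(u) M(rev v)`. Reversal is multiplicative over a
domain and turns `X - α` into `1 - α X`, whose Mahler measure `max ‖α‖ 1` is that of `X - α`;
splitting `v` into linear factors over `ℂ` therefore gives `M(rev v) = M(v)`.
-/

open Polynomial

/-- The Mahler measure of a real polynomial: `|a| · ∏ max(1,|αᵢ|)` over the complex
roots `αᵢ` (with multiplicity), where `a` is the leading coefficient. -/
noncomputable def mahlerMeasure (f : Polynomial ℝ) : ℝ :=
  ‖(f.map (algebraMap ℝ ℂ)).leadingCoeff‖ *
    (((f.map (algebraMap ℝ ℂ)).roots).map (fun α => max 1 ‖α‖)).prod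

namespace Polynomial

section Reverse

variable {R : Type*} [Semiring R]

@[simp]
theorem reverse_one : (1 : R[X]).reverse = 1 := by
  simpa using reverse_C (1 : R)

@[simp]
theorem reverse_X : (X : R[X]).reverse = 1 := by
  rw [← one_mul X, reverse_mul_X, reverse_one]

theorem reverse_map {S : Type*} [Semiring S] {φ : R →+* S} (hφ : Function.Injective φ)
    (p : R[X]) : (p.map φ).reverse = p.reverse.map φ := by
  rw [reverse, reverse, reflect_map, natDegree_map_eq_of_injective hφ]

end Reverse

@[simp]
theorem mahlerMeasure_X : (X : ℂ[X]).mahlerMeasure = 1 := by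
  simpa using mahlerMeasure_X_sub_C 0

@[simp]
theorem mahlerMeasure_X_pow (k : ℕ) : (X ^ k : ℂ[X]).mahlerMeasure = 1 := by
  induction k with
  | zero => simp
  | succ k ih => rw [pow_succ, mahlerMeasure_mul, ih, mahlerMeasure_X, one_mul]

theorem mahlerMeasure_reverse_X_sub_C (α : ℂ) :
    (X - C α).reverse.mahlerMeasure = max 1 ‖α‖ := by
  rcases eq_or_ne α 0 with rfl | hα
  · simp
  · have hrev : (X - C α).reverse = C (-α) * X + C 1 := by
      rw [sub_eq_add_neg, ← C_neg, reverse_add_C, reverse_X, natDegree_X, pow_one, map_one,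
        add_comm]
    rw [hrev, mahlerMeasure_C_mul_X_add_C (neg_ne_zero.mpr hα), norm_neg, norm_one, max_comm]

theorem mahlerMeasure_reverse (p : ℂ[X]) : p.reverse.mahlerMeasure = p.mahlerMeasure := by
  have closed_mul : ∀ q r : ℂ[X], q.reverse.mahlerMeasure = q.mahlerMeasure →
      r.reverse.mahlerMeasure = r.mahlerMeasure →
      (q * r).reverse.mahlerMeasure = (q * r).mahlerMeasure := by
    intro q r hq hr
    rw [reverse_mul_of_domain, mahlerMeasure_mul, mahlerMeasure_mul, hq, hr]
  rw [(IsAlgClosed.splits p).eq_prod_roots]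
  refine closed_mul _ _ (by rw [reverse_C]) ?_
  refine Multiset.prod_induction _ _ closed_mul (by simp) ?_
  simp only [Multiset.mem_map]
  rintro _ ⟨α, -, rfl⟩
  rw [mahlerMeasure_reverse_X_sub_C, mahlerMeasure_X_sub_C]

end Polynomial

theorem mahlerMeasure_eq_mahlerMeasure_map (f : ℝ[X]) :
    _root_.mahlerMeasure f = (f.map (algebraMap ℝ ℂ)).mahlerMeasure :=
  (Polynomial.mahlerMeasure_eq_leadingCoeff_mul_prod_roots _).symm

theorem stmt_3_general (f g u v : Polynomial ℝ) (ε₁ ε₂ : ℝ) (k₁ k₂ : ℕ)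
    (hε₁ : ε₁ = 1 ∨ ε₁ = -1) (hε₂ : ε₂ = 1 ∨ ε₂ = -1)
    (hfd : f = Polynomial.C ε₁ * X ^ k₁ * u * v)
    (hgd : g = Polynomial.C ε₂ * X ^ k₂ * u * v.reverse) :
    mahlerMeasure f = mahlerMeasure g := by
  have norm_sign : ∀ ε : ℝ, (ε = 1 ∨ ε = -1) → ‖algebraMap ℝ ℂ ε‖ = 1 := by
    rintro ε (rfl | rfl) <;> simp
  subst hfd hgd
  simp only [mahlerMeasure_eq_mahlerMeasure_map, Polynomial.map_mul, Polynomial.map_pow, map_X,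
    map_C, mahlerMeasure_mul, mahlerMeasure_const, mahlerMeasure_X_pow, norm_sign ε₁ hε₁,
    norm_sign ε₂ hε₂, ← reverse_map (algebraMap ℝ ℂ).injective, mahlerMeasure_reverse]

/-- Two nonzero real polynomials in the same Hillar class have the same Mahler measure. -/
theorem stmt_3 (f g u v : Polynomial ℝ) (hf : f ≠ 0) (hg : g ≠ 0)
    (hu : u ≠ 0) (hv : v ≠ 0) (ε₁ ε₂ : ℝ) (k₁ k₂ : ℕ)
    (hε₁ : ε₁ = 1 ∨ ε₁ = -1) (hε₂ : ε₂ = 1 ∨ ε₂ = -1)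
    (hfd : f = Polynomial.C ε₁ * X ^ k₁ * u * v)
    (hgd : g = Polynomial.C ε₂ * X ^ k₂ * u * v.reverse) :
    mahlerMeasure f = mahlerMeasure g :=
  stmt_3_general f g u v ε₁ ε₂ k₁ k₂ hε₁ hε₂ hfd hgd
end

section
/- Let u and v be nonzero real polynomials with u(0) ≠ 0 and v(0) ≠ 0, and set f = u·v and g = u·(reverse of v). If both f and g are reciprocal, i.e., reverse(f) = f or reverse(f) = −f, and reverse(g) = g or reverse(g) = −g, then g = f or g = −f. -/
open Polynomial

lemma rev_rev (v : Polynomial ℝ) (hv0 : v.coeff 0 ≠ 0) : v.reverse.reverse = v := by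
  have h0 : v.natTrailingDegree = 0 := by
    rw [natTrailingDegree_eq_zero]; exact Or.inr hv0
  have hm : v.mirror = v.reverse := by
    rw [Polynomial.mirror, h0, pow_zero, mul_one]
  have hm2 : v.reverse.mirror = v.reverse.reverse := by
    rw [Polynomial.mirror, natTrailingDegree_reverse, pow_zero, mul_one]
  rw [← hm2, ← hm, mirror_mirror]

/-- If `u, v` are nonzero real polynomials with nonzero constant terms, `f = u·v`,
`g = u·(reverse of v)`, and both `f` and `g` are reciprocal (equal to plus or minus
their own reverses), then `g = ± f`. -/
theorem stmt_5 (u v : Polynomial ℝ) (hu : u ≠ 0) (hv : v ≠ 0)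
    (hu0 : u.coeff 0 ≠ 0) (hv0 : v.coeff 0 ≠ 0)
    (f g : Polynomial ℝ) (hf : f = u * v) (hg : g = u * v.reverse)
    (hfrec : f.reverse = f ∨ f.reverse = -f)
    (hgrec : g.reverse = g ∨ g.reverse = -g) :
    g = f ∨ g = -f := by
  have hvr : v.reverse ≠ 0 := by simpa [reverse_eq_zero] using hv
  have hur : u.reverse ≠ 0 := by simpa [reverse_eq_zero] using hu
  have hvv : v * v.reverse ≠ 0 := mul_ne_zero hv hvr
  have hrf : f.reverse = u.reverse * v.reverse := by
    rw [hf, reverse_mul_of_domain]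
  have hrg : g.reverse = u.reverse * v := by
    rw [hg, reverse_mul_of_domain, rev_rev v hv0]
  -- contradiction helper for u.reverse * u.reverse = -(u*u)
  have contra : u.reverse * u.reverse ≠ -(u * u) := by
    intro h4
    have hlc := congrArg leadingCoeff h4
    rw [leadingCoeff_mul, leadingCoeff_neg, leadingCoeff_mul] at hlc
    have h1 : u.leadingCoeff ≠ 0 := leadingCoeff_ne_zero.mpr hu
    nlinarith [mul_self_nonneg u.reverse.leadingCoeff, mul_self_nonneg u.leadingCoeff,
      mul_self_pos.mpr h1]
  rcases hfrec with hδ | hδ <;> rcases hgrec with hε | hε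
  · have h1 : u.reverse * v = u * v.reverse := by rw [← hrg, hε, hg]
    have h2 : u.reverse * v.reverse = u * v := by rw [← hrf, hδ, hf]
    have h3 : (u.reverse * u.reverse) * (v * v.reverse) = (u * u) * (v * v.reverse) := by
      linear_combination (u.reverse * v.reverse) * h1 + (u * v.reverse) * h2
    have h4 := mul_right_cancel₀ hvv h3
    rcases mul_self_eq_mul_self_iff.mp h4 with hs | hs
    · left
      have hvr' : v.reverse = v := by
        rw [hs] at h1
        exact mul_left_cancel₀ hu (by linear_combination -h1)
      rw [hg, hf, hvr']
    · right
      have hvr' : v.reverse = -v := by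
        rw [hs] at h1
        exact mul_left_cancel₀ hu (by linear_combination -h1)
      rw [hg, hf, hvr', mul_neg]
  · exfalso
    have h1 : u.reverse * v = -(u * v.reverse) := by rw [← hrg, hε, hg]
    have h2 : u.reverse * v.reverse = u * v := by rw [← hrf, hδ, hf]
    have h3 : (u.reverse * u.reverse) * (v * v.reverse) = (-(u * u)) * (v * v.reverse) := by
      linear_combination (u.reverse * v.reverse) * h1 + (-(u * v.reverse)) * h2
    exact contra (mul_right_cancel₀ hvv h3)
  · exfalso
    have h1 : u.reverse * v = u * v.reverse := by rw [← hrg, hε, hg]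
    have h2 : u.reverse * v.reverse = -(u * v) := by rw [← hrf, hδ, hf]
    have h3 : (u.reverse * u.reverse) * (v * v.reverse) = (-(u * u)) * (v * v.reverse) := by
      linear_combination (u.reverse * v.reverse) * h1 + (u * v.reverse) * h2
    exact contra (mul_right_cancel₀ hvv h3)
  · have h1 : u.reverse * v = -(u * v.reverse) := by rw [← hrg, hε, hg]
    have h2 : u.reverse * v.reverse = -(u * v) := by rw [← hrf, hδ, hf]
    have h3 : (u.reverse * u.reverse) * (v * v.reverse) = (u * u) * (v * v.reverse) := by
      linear_combination (u.reverse * v.reverse) * h1 + (-(u * v.reverse)) * h2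
    have h4 := mul_right_cancel₀ hvv h3
    rcases mul_self_eq_mul_self_iff.mp h4 with hs | hs
    · right
      have hvr' : v.reverse = -v := by
        rw [hs] at h1
        exact mul_left_cancel₀ hu (by linear_combination h1)
      rw [hg, hf, hvr', mul_neg]
    · left
      have hvr' : v.reverse = v := by
        rw [hs] at h1
        exact mul_left_cancel₀ hu (by linear_combination h1)
      rw [hg, hf, hvr']
end

section
/- Let ζ ∈ ℂ be a primitiveal 12th root of unity, and consider the multisets A = {ζ, ζ⁸} and B = {ζ⁴, ζ⁵} of complex numbers. Then the multiset of cubes of the elements of A equals the multiset of cubes of the elements of B, and the multiset of fourth powers of the elements of A equals the multiset of fourth powers of the elements of B, but A ≠ B as multisets. (In particular, equality of the m-th power multisets and of the n-th power multisets does not imply equality of the gcd(m,n)-th power multisets.) -/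
/-- For a primitive 12th root of unity `ζ`, the multisets `A = {ζ, ζ⁸}` and
`B = {ζ⁴, ζ⁵}` satisfy `A³ = B³` and `A⁴ = B⁴` as multisets of cubes resp. fourth
powers, yet `A ≠ B`. -/
theorem stmt_10 (ζ : ℂ) (hζ : IsPrimitiveRoot ζ 12) :
    Multiset.map (fun x : ℂ => x ^ 3) {ζ, ζ ^ 8} =
        Multiset.map (fun x : ℂ => x ^ 3) {ζ ^ 4, ζ ^ 5} ∧
      Multiset.map (fun x : ℂ => x ^ 4) {ζ, ζ ^ 8} =
        Multiset.map (fun x : ℂ => x ^ 4) {ζ ^ 4, ζ ^ 5} ∧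
      ({ζ, ζ ^ 8} : Multiset ℂ) ≠ {ζ ^ 4, ζ ^ 5} := by
  have h12 : ζ ^ 12 = 1 := hζ.pow_eq_one
  have h24 : ζ ^ 24 = 1 := by rw [show (24:ℕ) = 12*2 by norm_num, pow_mul, h12, one_pow]
  refine ⟨?_, ?_, ?_⟩
  · simp only [Multiset.map_cons, Multiset.map_singleton, Multiset.insert_eq_cons]
    rw [← pow_mul, ← pow_mul, ← pow_mul]
    norm_num
    rw [h24, show (15:ℕ) = 12+3 by norm_num, pow_add, h12, one_mul]
    exact Multiset.cons_swap _ _ _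
  · simp only [Multiset.map_cons, Multiset.map_singleton, Multiset.insert_eq_cons]
    rw [← pow_mul, ← pow_mul, ← pow_mul]
    norm_num
    rw [show (32:ℕ) = 24+8 by norm_num, pow_add, h24, one_mul,
      show (16:ℕ) = 12+4 by norm_num, pow_add, h12, one_mul,
      show (20:ℕ) = 12+8 by norm_num, pow_add, h12, one_mul]
  · intro h
    have h3 : ζ ^ 3 ≠ 1 := hζ.pow_ne_one_of_pos_of_lt (by norm_num) (by norm_num)
    have h4 : ζ ^ 4 ≠ 1 := hζ.pow_ne_one_of_pos_of_lt (by norm_num) (by norm_num)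
    have hne : ζ ≠ 0 := hζ.ne_zero (by norm_num)
    have hmem : ζ ∈ ({ζ^4, ζ^5} : Multiset ℂ) := by
      rw [← h]; exact Multiset.mem_cons_self _ _
    simp only [Multiset.insert_eq_cons, Multiset.mem_cons, Multiset.mem_singleton] at hmem
    rcases hmem with hh | hh
    · apply h3
      have : ζ * ζ ^ 3 = ζ * 1 := by rw [mul_one, ← pow_succ']; exact hh.symm
      exact mul_left_cancel₀ hne this
    · apply h4
      have : ζ * ζ ^ 4 = ζ * 1 := by rw [mul_one, ← pow_succ']; exact hh.symm
      exact mul_left_cancel₀ hne this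
end

section
/- Fix a prime p and an algebraic closure Ω of ℚ_p with its unique absolute value ‖·‖ extending the p-adic absolute value. Let f be a nonzero polynomial with integer coefficients. For each integer n ≥ 1 set r'_n = ∏ f(ζ), the product over all n-th roots of unity ζ ∈ Ω with f(ζ) ≠ 0 (an empty product being 1); each r'_n is a nonzero rational number. Then lim_{n→∞} ‖r'_n‖^{1/n} = M_p(f), the p-adic Mahler measure of f. -/
/-!
Over `Ω` the polynomial splits as `f = a ∏ (X - α)`, so
`‖r'_n‖ = ‖a‖ ^ |S_n| ∏_α ∏_{ζ ∈ S_n} ‖ζ - α‖`, where `S_n` is the multiset of `n`-th roots of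
unity that are not roots of `f`; it has between `n - deg f` and `n` elements. Roots of unity have
norm one, so for `‖α‖ ≠ 1` every factor `‖ζ - α‖` equals `max 1 ‖α‖`. For `‖α‖ = 1` every factor
is at most one, so the inner product lies between `1` and the product over all `n`-th roots of
unity `ζ ≠ α`, which is `‖α ^ n - 1‖` or `‖n‖ ≥ 1 / n`. Finally `‖α ^ n - 1‖ ≥ c / n` when
`α ^ n ≠ 1`: if `m` is least with `‖α ^ m - 1‖ < ‖p‖`, then `‖α ^ n - 1‖ < ‖p‖` forces `m ∣ n`,
and the binomial estimate `‖(1 + β) ^ k - 1‖ = ‖k‖ ‖β‖` for `‖β‖ < ‖p‖` gives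
`‖α ^ n - 1‖ = ‖n / m‖ ‖α ^ m - 1‖`.
-/

open Polynomial Filter Topology

/-- The product of the values of the integer polynomial `f` at those `n`-th roots of
unity in `Ω` where `f` does not vanish (an empty product being `1`). -/
noncomputable def rPrimePadic (Ω : Type) [NormedField Ω] (n : ℕ) (f : Polynomial ℤ) : Ω :=
  letI := Classical.decEq Ω
  ((Polynomial.nthRoots n (1 : Ω)).map (fun ζ =>
    if Polynomial.eval ζ (f.map (Int.castRingHom Ω)) = 0 then 1
    else Polynomial.eval ζ (f.map (Int.castRingHom Ω)))).prod

/-- The `p`-adic Mahler measure of an integer polynomial, computed in a normed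
algebraically closed field `Ω` extending `ℚ_p`. -/
noncomputable def pAdicMahlerMeasure (p : ℕ) [Fact p.Prime] (Ω : Type) [NormedField Ω]
    [Algebra ℚ_[p] Ω] (f : Polynomial ℤ) : ℝ :=
  ‖(f.map (Int.castRingHom Ω)).leadingCoeff‖ *
    (((f.map (Int.castRingHom Ω)).roots).map (fun α => max 1 ‖α‖)).prod

open IsUltrametricDist

lemma Multiset.norm_prod {Ω : Type*} [NormedField Ω] (s : Multiset Ω) :
    ‖s.prod‖ = (s.map (‖·‖)).prod :=
  map_multiset_prod (normHom : Ω →*₀ ℝ) s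

lemma Multiset.prod_map_le_prod_map_of_le {ι : Type*} {s t : Multiset ι} (hst : s ≤ t)
    {g : ι → ℝ} (h0 : ∀ i ∈ t, 0 ≤ g i) (h1 : ∀ i ∈ t, g i ≤ 1) :
    (t.map g).prod ≤ (s.map g).prod := by
  obtain ⟨u, rfl⟩ := Multiset.le_iff_exists_add.1 hst
  have hu : (u.map g).prod ≤ 1 := by
    simpa using Multiset.prod_map_le_prod_map₀ g (fun _ => 1)
      (fun i hi => h0 i (Multiset.mem_add.2 (Or.inr hi)))
      (fun i hi => h1 i (Multiset.mem_add.2 (Or.inr hi)))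
  rw [Multiset.map_add, Multiset.prod_add]
  exact mul_le_of_le_one_right
    (Multiset.prod_map_nonneg fun i hi => h0 i (Multiset.mem_add.2 (Or.inl hi))) hu

lemma Multiset.prod_map_ite_one {ι M : Type*} [CommMonoid M] (s : Multiset ι) (P : ι → Prop)
    [DecidablePred P] (g : ι → M) :
    (s.map fun a => if P a then 1 else g a).prod = ((s.filter (¬P ·)).map g).prod := by
  induction s using Multiset.induction_on with
  | empty => simp
  | cons a s ih => by_cases h : P a <;> simp [h, ih]

lemma tendsto_natCast_div_self_of_le_of_le_add {a : ℕ → ℕ} {D : ℕ}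
    (ha : ∀ᶠ n in atTop, a n ≤ n ∧ n ≤ a n + D) :
    Tendsto (fun n : ℕ => (a n : ℝ) / n) atTop (𝓝 1) := by
  have hlow : Tendsto (fun n : ℕ => 1 - (D : ℝ) / n) atTop (𝓝 1) := by
    simpa using tendsto_const_nhds.sub (tendsto_const_div_atTop_nhds_zero_nat (D : ℝ))
  refine tendsto_of_tendsto_of_tendsto_of_le_of_le' hlow tendsto_const_nhds ?_ ?_
  all_goals
    filter_upwards [ha, eventually_gt_atTop 0] with n ⟨hle, hge⟩ hn
    have hn : (0 : ℝ) < n := by exact_mod_cast hn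
    have hge : (n : ℝ) ≤ a n + D := by exact_mod_cast hge
    have hle : (a n : ℝ) ≤ n := by exact_mod_cast hle
  · rw [one_sub_div hn.ne']
    gcongr
    linarith
  · rwa [div_le_one hn]

lemma tendsto_pow_rpow_inv_of_le_of_le_add {c : ℝ} (hc : 0 < c) {a : ℕ → ℕ} {D : ℕ}
    (ha : ∀ᶠ n in atTop, a n ≤ n ∧ n ≤ a n + D) :
    Tendsto (fun n : ℕ => (c ^ a n) ^ (n : ℝ)⁻¹) atTop (𝓝 c) := by
  have hexp : ∀ n : ℕ, (c ^ a n) ^ (n : ℝ)⁻¹ = c ^ ((a n : ℝ) / n) := fun n => by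
    rw [← Real.rpow_natCast, ← Real.rpow_mul hc.le, div_eq_mul_inv]
  simpa [hexp, Function.comp_def] using ((Real.continuousAt_const_rpow hc.ne').tendsto.comp
    (tendsto_natCast_div_self_of_le_of_le_add ha))

lemma tendsto_rpow_inv_of_div_le_of_le_one {c : ℝ} (hc : 0 < c) {u : ℕ → ℝ}
    (hu : ∀ᶠ n in atTop, c / n ≤ u n ∧ u n ≤ 1) :
    Tendsto (fun n : ℕ => u n ^ (n : ℝ)⁻¹) atTop (𝓝 1) := by
  have hinv : Tendsto (fun n : ℕ => (n : ℝ)⁻¹) atTop (𝓝 0) :=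
    tendsto_inv_atTop_zero.comp tendsto_natCast_atTop_atTop
  have hconst : Tendsto (fun n : ℕ => c ^ (n : ℝ)⁻¹) atTop (𝓝 1) := by
    simpa using (tendsto_const_nhds (x := c)).rpow hinv (Or.inl hc.ne')
  have hnat : Tendsto (fun n : ℕ => (n : ℝ) ^ (n : ℝ)⁻¹) atTop (𝓝 1) := by
    simpa [Function.comp_def, one_div] using tendsto_rpow_div.comp tendsto_natCast_atTop_atTop
  have hlow : Tendsto (fun n : ℕ => (c / n) ^ (n : ℝ)⁻¹) atTop (𝓝 1) := by
    simpa [Real.div_rpow hc.le (Nat.cast_nonneg _), Pi.div_def] using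
      hconst.div hnat one_ne_zero
  refine tendsto_of_tendsto_of_tendsto_of_le_of_le' hlow tendsto_const_nhds ?_ ?_
  · filter_upwards [hu] with n ⟨hlow, _⟩
    exact Real.rpow_le_rpow (by positivity) hlow (by positivity)
  · filter_upwards [hu] with n ⟨hlow, hup⟩
    exact Real.rpow_le_one ((by positivity : 0 ≤ c / n).trans hlow) hup (by positivity)

section Ultrametric

variable {Ω : Type*} [NormedField Ω] [IsUltrametricDist Ω]

lemma norm_sub_le_max_norm (x y : Ω) : ‖x - y‖ ≤ max ‖x‖ ‖y‖ := by
  simpa [sub_eq_add_neg] using norm_add_le_max x (-y)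

lemma norm_sub_eq_max_of_norm_ne_norm {x y : Ω} (h : ‖x‖ ≠ ‖y‖) : ‖x - y‖ = max ‖x‖ ‖y‖ := by
  simpa [sub_eq_add_neg] using norm_add_eq_max_of_norm_ne_norm (y := -y) (by rwa [norm_neg])

lemma norm_one_add_pow_sub_one_sub_mul_le {β : Ω} (hβ : ‖β‖ ≤ 1) (k : ℕ) :
    ‖(1 + β) ^ k - 1 - k * β‖ ≤ ‖β‖ ^ 2 := by
  induction k with
  | zero => simp
  | succ k ih =>
    have h1β : ‖1 + β‖ ≤ 1 := (norm_add_le_max _ _).trans (by simp [hβ])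
    have hk : ‖(k : Ω) * β ^ 2‖ ≤ ‖β‖ ^ 2 := by
      rw [norm_mul, norm_pow]
      exact mul_le_of_le_one_left (by positivity) (norm_natCast_le_one Ω k)
    calc ‖(1 + β) ^ (k + 1) - 1 - ↑(k + 1) * β‖
        = ‖(1 + β) * ((1 + β) ^ k - 1 - k * β) + k * β ^ 2‖ := by push_cast; ring_nf
      _ ≤ ‖β‖ ^ 2 := (norm_add_le_max _ _).trans <| max_le
          (by rw [norm_mul]; exact mul_le_of_le_one_left (norm_nonneg _) h1β |>.trans ih) hk

lemma norm_one_add_pow_sub_one_of_norm_lt {β : Ω} {k : ℕ} (hβ : ‖β‖ < ‖(k : Ω)‖) :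
    ‖(1 + β) ^ k - 1‖ = ‖(k : Ω)‖ * ‖β‖ := by
  rcases eq_or_ne β 0 with rfl | hβ0
  · simp
  have hk1 : ‖(k : Ω)‖ ≤ 1 := norm_natCast_le_one Ω k
  have hrest : ‖(1 + β) ^ k - 1 - k * β‖ < ‖(k : Ω) * β‖ := by
    rw [norm_mul]
    calc _ ≤ ‖β‖ ^ 2 := norm_one_add_pow_sub_one_sub_mul_le (hβ.le.trans hk1) k
      _ = ‖β‖ * ‖β‖ := sq _
      _ < ‖(k : Ω)‖ * ‖β‖ := mul_lt_mul_of_pos_right hβ (norm_pos_iff.mpr hβ0)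
  rw [← norm_mul, ← sub_add_cancel ((1 + β) ^ k - 1) (k * β), add_comm,
    norm_add_eq_max_of_norm_ne_norm hrest.ne', max_eq_left hrest.le]

end Ultrametric

section Padic

variable {Ω : Type*} [NormedField Ω] {p : ℕ} [Fact p.Prime]
  (hnat : ∀ k : ℕ, ‖(k : Ω)‖ = ‖(k : ℚ_[p])‖)
include hnat

lemma inv_le_norm_natCast {k : ℕ} (hk : k ≠ 0) : (k : ℝ)⁻¹ ≤ ‖(k : Ω)‖ := by
  rw [hnat, Padic.norm_eq_zpow_neg_valuation (by exact_mod_cast hk), Padic.valuation_natCast,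
    zpow_neg, zpow_natCast]
  have hp : (0 : ℝ) < p := by exact_mod_cast (Fact.out : p.Prime).pos
  have hle : p ^ padicValNat p k ≤ k := Nat.le_of_dvd (Nat.pos_of_ne_zero hk) pow_padicValNat_dvd
  exact inv_anti₀ (pow_pos hp _) (by exact_mod_cast hle)

variable [IsUltrametricDist Ω]

lemma norm_one_add_pow_sub_one {β : Ω} (hβ : ‖β‖ < ‖(p : Ω)‖) (k : ℕ) :
    ‖(1 + β) ^ k - 1‖ = ‖(k : Ω)‖ * ‖β‖ := by
  induction k using Nat.strong_induction_on with
  | _ k ih =>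
  by_cases hpk : p ∣ k
  · rcases eq_or_ne k 0 with rfl | hk0
    · simp
    obtain ⟨m, rfl⟩ := hpk
    have hm : m < p * m :=
      lt_mul_left (Nat.pos_of_ne_zero (right_ne_zero_of_mul hk0)) (Fact.out : p.Prime).one_lt
    have hγ : ‖(1 + β) ^ m - 1‖ < ‖(p : Ω)‖ := by
      rw [ih m hm]
      exact (mul_le_of_le_one_left (norm_nonneg _) (norm_natCast_le_one Ω m)).trans_lt hβ
    rw [pow_mul', ← add_sub_cancel (1 : Ω) ((1 + β) ^ m),
      norm_one_add_pow_sub_one_of_norm_lt hγ, ih m hm, Nat.cast_mul, norm_mul, mul_assoc]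
  · have hk : ‖(k : Ω)‖ = 1 := by
      rw [hnat, Padic.norm_natCast_eq_one_iff, Nat.Prime.coprime_iff_not_dvd Fact.out]
      exact hpk
    exact norm_one_add_pow_sub_one_of_norm_lt (hk ▸ hβ.trans_le (norm_natCast_le_one Ω p))

lemma norm_pow_mul_sub_one {α : Ω} {m : ℕ} (hm : ‖α ^ m - 1‖ < ‖(p : Ω)‖) (q : ℕ) :
    ‖α ^ (m * q) - 1‖ = ‖(q : Ω)‖ * ‖α ^ m - 1‖ := by
  simpa [pow_mul] using norm_one_add_pow_sub_one hnat hm q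

lemma dvd_of_norm_pow_sub_one_lt {α : Ω} (hα : ‖α‖ = 1) {m n : ℕ} (hm0 : m ≠ 0)
    (hm : ‖α ^ m - 1‖ < ‖(p : Ω)‖) (hmin : ∀ r < m, r ≠ 0 → ‖(p : Ω)‖ ≤ ‖α ^ r - 1‖)
    (hn : ‖α ^ n - 1‖ < ‖(p : Ω)‖) : m ∣ n := by
  rw [Nat.dvd_iff_mod_eq_zero]
  by_contra hr
  refine (hmin _ (Nat.mod_lt n (Nat.pos_of_ne_zero hm0)) hr).not_gt ?_
  have hq : ‖α ^ (m * (n / m)) - 1‖ < ‖(p : Ω)‖ := (norm_pow_mul_sub_one hnat hm _).trans_lt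
    ((mul_le_of_le_one_left (norm_nonneg _) (norm_natCast_le_one Ω _)).trans_lt hm)
  have hsplit : α ^ n = α ^ (m * (n / m)) * α ^ (n % m) := by rw [← pow_add, Nat.div_add_mod]
  calc ‖α ^ (n % m) - 1‖ = ‖α ^ (m * (n / m)) * (α ^ (n % m) - 1)‖ := by
        rw [norm_mul, norm_pow, hα, one_pow, one_mul]
    _ = ‖(α ^ n - 1) - (α ^ (m * (n / m)) - 1)‖ := by rw [hsplit]; ring_nf
    _ ≤ max ‖α ^ n - 1‖ ‖α ^ (m * (n / m)) - 1‖ := norm_sub_le_max_norm _ _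
    _ < ‖(p : Ω)‖ := max_lt hn hq

lemma exists_pos_div_le_norm_pow_sub_one {α : Ω} (hα : ‖α‖ = 1) :
    ∃ c > 0, ∀ n : ℕ, n ≠ 0 → α ^ n ≠ 1 → c / n ≤ ‖α ^ n - 1‖ := by
  have hδ : 0 < ‖(p : Ω)‖ := by
    rw [hnat, Padic.norm_p]
    exact inv_pos.mpr (by exact_mod_cast (Fact.out : p.Prime).pos)
  set δ := ‖(p : Ω)‖
  have hdiv : ∀ {c : ℝ} {n : ℕ}, 0 ≤ c → n ≠ 0 → c / n ≤ c := fun hc hn =>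
    div_le_self hc (by exact_mod_cast Nat.one_le_iff_ne_zero.mpr hn)
  by_cases h : ∃ m, m ≠ 0 ∧ ‖α ^ m - 1‖ < δ
  swap
  · push Not at h
    exact ⟨δ, hδ, fun n hn _ => (hdiv hδ.le hn).trans (h n hn)⟩
  classical
  obtain ⟨hm0, hmδ⟩ := Nat.find_spec h
  set m := Nat.find h
  have hdvd {n : ℕ} (hn : ‖α ^ n - 1‖ < δ) : m ∣ n :=
    dvd_of_norm_pow_sub_one_lt hnat hα hm0 hmδ
      (fun r hr hr0 => not_lt.1 fun hlt => Nat.find_min h hr ⟨hr0, hlt⟩) hn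
  by_cases hβ : α ^ m = 1
  · refine ⟨δ, hδ, fun n hn hαn => (hdiv hδ.le hn).trans ?_⟩
    by_contra! hlt
    obtain ⟨q, rfl⟩ := hdvd hlt
    exact hαn (by rw [pow_mul, hβ, one_pow])
  refine ⟨min δ ‖α ^ m - 1‖, lt_min hδ (norm_pos_iff.mpr (sub_ne_zero.mpr hβ)),
    fun n hn _ => ?_⟩
  rcases lt_or_ge ‖α ^ n - 1‖ δ with hlt | hge
  · obtain ⟨q, rfl⟩ := hdvd hlt
    have hq : q ≠ 0 := right_ne_zero_of_mul hn
    calc min δ ‖α ^ m - 1‖ / ↑(m * q) ≤ ‖α ^ m - 1‖ / q := by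
          gcongr
          · exact min_le_right _ _
          · exact_mod_cast Nat.le_mul_of_pos_left q (Nat.pos_of_ne_zero hm0)
      _ ≤ ‖(q : Ω)‖ * ‖α ^ m - 1‖ := by
          rw [div_eq_inv_mul]
          exact mul_le_mul_of_nonneg_right (inv_le_norm_natCast hnat hq) (norm_nonneg _)
      _ = ‖α ^ (m * q) - 1‖ := (norm_pow_mul_sub_one hnat hmδ q).symm
  · exact (hdiv (by positivity) hn).trans ((min_le_left _ _).trans hge)

end Padic

lemma norm_eq_one_of_mem_nthRoots {Ω : Type*} [NormedField Ω] {n : ℕ} {ζ : Ω}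
    (h : ζ ∈ nthRoots n (1 : Ω)) : ‖ζ‖ = 1 := by
  rcases n.eq_zero_or_pos with rfl | hn
  · simp at h
  exact (pow_eq_one_iff_of_nonneg (norm_nonneg ζ) hn.ne').1
    (by rw [← norm_pow, (mem_nthRoots hn).1 h, norm_one])

section AlgClosed

variable {K : Type*} [Field K] [IsAlgClosed K]

lemma prod_nthRoots_one_sub {n : ℕ} (hn : n ≠ 0) (α : K) :
    ((nthRoots n (1 : K)).map (α - ·)).prod = α ^ n - 1 := by
  simpa [nthRoots] using ((IsAlgClosed.splits (X ^ n - C (1 : K))).eval_eq_prod_roots_of_monic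
    (monic_X_pow_sub_C 1 hn) α).symm

lemma prod_erase_nthRoots_one_sub [DecidableEq K] {n : ℕ} {α : K}
    (hα : α ∈ nthRoots n (1 : K)) :
    (((nthRoots n (1 : K)).erase α).map (α - ·)).prod = n * α ^ (n - 1) := by
  have hn : n ≠ 0 := by rintro rfl; simp at hα
  have hsplit : ((nthRoots n (1 : K)).map (X - C ·)).prod = X ^ n - C 1 :=
    ((IsAlgClosed.splits _).eq_prod_roots_of_monic (monic_X_pow_sub_C 1 hn)).symm
  rw [← eval_multiset_prod_X_sub_C_derivative hα, hsplit]
  simp [derivative_X_pow]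

lemma card_nthRoots_one_le_card_filter_add [CharZero K] [DecidableEq K] (n : ℕ) {F : K[X]}
    (hF : F ≠ 0) :
    n ≤ Multiset.card ((nthRoots n (1 : K)).filter (F.eval · ≠ 0)) + Multiset.card F.roots := by
  rcases eq_or_ne n 0 with rfl | hn
  · simp
  have : NeZero (n : K) := ⟨Nat.cast_ne_zero.mpr hn⟩
  obtain ⟨ζ, hζ⟩ := HasEnoughRootsOfUnity.exists_primitiveRoot K n
  have hroots : (nthRoots n (1 : K)).filter (F.eval · = 0) ≤ F.roots :=
    (Multiset.le_iff_subset (hζ.nthRoots_one_nodup.filter _)).2 fun x hx =>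
      (mem_roots hF).2 (Multiset.of_mem_filter hx)
  calc n = Multiset.card (nthRoots n (1 : K)) := hζ.card_nthRoots_one.symm
    _ = _ := by rw [← (nthRoots n (1 : K)).filter_add_not (F.eval · ≠ 0), Multiset.card_add]
    _ ≤ _ := by simp only [not_not]; gcongr

end AlgClosed

lemma tendsto_pow_card_rpow_inv {K : Type*} [CommRing K] [IsDomain K] {c : ℝ} (hc : 0 < c)
    {S : ℕ → Multiset K} {D : ℕ} (hS : ∀ n, S n ≤ nthRoots n (1 : K))
    (hcard : ∀ n, n ≤ Multiset.card (S n) + D) :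
    Tendsto (fun n : ℕ => (c ^ Multiset.card (S n)) ^ (n : ℝ)⁻¹) atTop (𝓝 c) :=
  tendsto_pow_rpow_inv_of_le_of_le_add hc <| Eventually.of_forall fun n =>
    ⟨(Multiset.card_le_card (hS n)).trans (card_nthRoots n 1), hcard n⟩

lemma tendsto_prod_norm_sub_rpow_inv {Ω : Type*} [NormedField Ω] [IsUltrametricDist Ω]
    [IsAlgClosed Ω] {p : ℕ} [Fact p.Prime] (hnat : ∀ k : ℕ, ‖(k : Ω)‖ = ‖(k : ℚ_[p])‖) {α : Ω}
    {S : ℕ → Multiset Ω} {D : ℕ} (hS : ∀ n, S n ≤ nthRoots n (1 : Ω)) (hα : ∀ n, α ∉ S n)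
    (hcard : ∀ n, n ≤ Multiset.card (S n) + D) :
    Tendsto (fun n : ℕ => ((S n).map (‖· - α‖)).prod ^ (n : ℝ)⁻¹) atTop (𝓝 (max 1 ‖α‖)) := by
  classical
  by_cases hα1 : ‖α‖ = 1
  swap
  · have hfactor (n : ℕ) : ((S n).map (‖· - α‖)).prod = max 1 ‖α‖ ^ Multiset.card (S n) := by
      rw [Multiset.map_congr rfl (g := fun _ => max 1 ‖α‖), Multiset.map_const',
        Multiset.prod_replicate]
      intro ζ hζ
      have hζ1 := norm_eq_one_of_mem_nthRoots (Multiset.mem_of_le (hS n) hζ)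
      rw [norm_sub_eq_max_of_norm_ne_norm (hζ1 ▸ Ne.symm hα1), hζ1]
    simp_rw [hfactor]
    exact tendsto_pow_card_rpow_inv (by positivity) hS hcard
  rw [hα1, max_self]
  have hle_one (n : ℕ) : ∀ ζ ∈ (nthRoots n (1 : Ω)).erase α, ‖ζ - α‖ ≤ 1 := fun ζ hζ =>
    (norm_sub_le_max_norm ζ α).trans <| by
      rw [norm_eq_one_of_mem_nthRoots (Multiset.mem_of_mem_erase hζ), hα1, max_self]
  have hS_le (n : ℕ) : S n ≤ (nthRoots n (1 : Ω)).erase α := by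
    simpa [Multiset.erase_of_notMem (hα n)] using Multiset.erase_le_erase α (hS n)
  have hnorm_prod (T : Multiset Ω) : (T.map (‖· - α‖)).prod = ‖(T.map (α - ·)).prod‖ := by
    simp [Multiset.norm_prod, Multiset.map_map, norm_sub_rev]
  obtain ⟨c, hc, hc_le⟩ := exists_pos_div_le_norm_pow_sub_one hnat hα1
  have hlower (n : ℕ) (hn : n ≠ 0) :
      min c 1 / n ≤ (((nthRoots n (1 : Ω)).erase α).map (‖· - α‖)).prod := by
    rw [hnorm_prod]
    by_cases hαn : α ∈ nthRoots n (1 : Ω)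
    · rw [prod_erase_nthRoots_one_sub hαn, norm_mul, norm_pow, hα1, one_pow, mul_one,
        div_eq_mul_inv]
      exact (mul_le_of_le_one_left (by positivity) (min_le_right c 1)).trans
        (inv_le_norm_natCast hnat hn)
    · rw [Multiset.erase_of_notMem hαn, prod_nthRoots_one_sub hn]
      exact (div_le_div_of_nonneg_right (min_le_left c 1) (by positivity)).trans
        (hc_le n hn fun h => hαn ((mem_nthRoots (Nat.pos_of_ne_zero hn)).2 h))
  refine tendsto_rpow_inv_of_div_le_of_le_one (lt_min hc one_pos)
    ((eventually_ne_atTop 0).mono fun n hn => ⟨?_, ?_⟩)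
  · exact (hlower n hn).trans (Multiset.prod_map_le_prod_map_of_le (hS_le n)
      (fun _ _ => norm_nonneg _) (hle_one n))
  · simpa using Multiset.prod_map_le_prod_map_of_le (Multiset.zero_le (S n))
      (fun _ _ => norm_nonneg _) fun ζ hζ => hle_one n ζ (Multiset.mem_of_le (hS_le n) hζ)

lemma rPrimePadic_eq_prod_filter {Ω : Type} [NormedField Ω] [DecidableEq Ω] (n : ℕ)
    (f : ℤ[X]) : rPrimePadic Ω n f =
      (((nthRoots n (1 : Ω)).filter ((f.map (Int.castRingHom Ω)).eval · ≠ 0)).map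
        (f.map (Int.castRingHom Ω)).eval).prod := by
  unfold rPrimePadic
  convert Multiset.prod_map_ite_one _ _ _

lemma norm_prod_map_eval {Ω : Type*} [NormedField Ω] [IsAlgClosed Ω] (F : Polynomial Ω)
    (T : Multiset Ω) : ‖(T.map F.eval).prod‖ =
      ‖F.leadingCoeff‖ ^ Multiset.card T * (F.roots.map fun α => (T.map (‖· - α‖)).prod).prod := by
  simp only [Multiset.norm_prod, Multiset.map_map, Function.comp_def,
    (IsAlgClosed.splits F).eval_eq_prod_roots, norm_mul, Multiset.prod_map_mul,
    Multiset.map_const', Multiset.prod_replicate]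
  rw [Multiset.prod_map_prod_map, norm_pow]

/-- `p`-adic asymptotic growth of the (nonvanishing parts of the) cyclic resultants of a
nonzero integer polynomial: `‖r'_n‖^{1/n} → M_p(f)`. -/
theorem stmt_13 (p : ℕ) [Fact p.Prime] (Ω : Type) [NormedField Ω]
    [Algebra ℚ_[p] Ω] [IsAlgClosure ℚ_[p] Ω]
    (hext : ∀ x : ℚ_[p], ‖algebraMap ℚ_[p] Ω x‖ = ‖x‖)
    (f : Polynomial ℤ) (hf : f ≠ 0) :
    Tendsto (fun n : ℕ => ‖rPrimePadic Ω n f‖ ^ ((n : ℝ)⁻¹)) atTop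
      (𝓝 (pAdicMahlerMeasure p Ω f)) := by
  classical
  have : IsAlgClosed Ω := IsAlgClosure.isAlgClosed ℚ_[p]
  have : CharZero Ω := charZero_of_injective_algebraMap (algebraMap ℚ_[p] Ω).injective
  have hnat (k : ℕ) : ‖(k : Ω)‖ = ‖(k : ℚ_[p])‖ := by
    rw [← map_natCast (algebraMap ℚ_[p] Ω), hext]
  have : IsUltrametricDist Ω := isUltrametricDist_of_forall_norm_natCast_le_one fun k => by
    simpa [hnat] using Padic.norm_int_le_one (p := p) k
  set F := f.map (Int.castRingHom Ω)
  have hF : F ≠ 0 := (Polynomial.map_ne_zero_iff Int.cast_injective).2 hf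
  set S : ℕ → Multiset Ω := fun n => (nthRoots n (1 : Ω)).filter (F.eval · ≠ 0)
  have hS (n : ℕ) : S n ≤ nthRoots n (1 : Ω) := Multiset.filter_le _ _
  have hcard (n : ℕ) : n ≤ Multiset.card (S n) + Multiset.card F.roots :=
    card_nthRoots_one_le_card_filter_add n hF
  have hsplit (n : ℕ) : ‖rPrimePadic Ω n f‖ ^ (n : ℝ)⁻¹ =
      (‖F.leadingCoeff‖ ^ Multiset.card (S n)) ^ (n : ℝ)⁻¹ *
        (F.roots.map fun α => ((S n).map (‖· - α‖)).prod ^ (n : ℝ)⁻¹).prod := by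
    have hnonneg (α : Ω) : 0 ≤ ((S n).map (‖· - α‖)).prod :=
      Multiset.prod_map_nonneg fun _ _ => norm_nonneg _
    rw [rPrimePadic_eq_prod_filter, norm_prod_map_eval,
      Real.mul_rpow (by positivity) (Multiset.prod_map_nonneg fun α _ => hnonneg α),
      Real.multiset_prod_map_rpow _ _ (fun α _ => hnonneg α)]
  simp_rw [hsplit]
  exact (tendsto_pow_card_rpow_inv (norm_pos_iff.2 (leadingCoeff_ne_zero.2 hF)) hS hcard).mul
    (tendsto_multiset_prod _ fun α hα => tendsto_prod_norm_sub_rpow_inv hnat hS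
      (fun n hαS => (Multiset.of_mem_filter hαS) ((mem_roots hF).1 hα)) hcard)
end
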